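/- Let G be a Polish group acting continuously by isometries on a countable metric space (X,d) with d(x,y) ≥ 1 for all distinct x, y ∈ X (so X is discrete), and assume some orbit is unbounded. Then there is a separable Hilbert space H and a continuous linear representation π : G → GL(H) which is unbounded, i.e., sup_{g∈G} ‖π(g)‖ = ∞. -/

import Mathlib

/-!
Fix `x₀` with unbounded orbit and let `G` act on `ℓ²(X)` by `(π g f)(x) = w_g(x) f(g⁻¹ x)`,
where `w_g(x) = exp (d(x, g x₀) - d(x, x₀))`; since `G` acts by isometries, `w` is a cocycle and
`π` is a representation. By the triangle inequality `w_g ≤ w_g(x₀) = exp d(x₀, g x₀)`, and `π g`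
maps `δ_{g⁻¹ x₀}` to `w_g(x₀) δ_{x₀}`, so `‖π g‖ = exp d(x₀, g x₀)`, which is unbounded along the
orbit. This norm is continuous in `g`, so `π` is locally bounded; as `X` is discrete, each
`g ↦ π g δ_y` is continuous, and local boundedness upgrades continuity on the finitely supported
vectors to joint continuity on `G × ℓ²(X)`.
-/

open Filter Topology Bornology
open scoped ENNReal lp

section StrongContinuity

variable {α 𝕜 E F : Type*} [TopologicalSpace α] [NontriviallyNormedField 𝕜]
  [NormedAddCommGroup E] [NormedSpace 𝕜 E] [NormedAddCommGroup F] [NormedSpace 𝕜 F]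
  {T : α → E →L[𝕜] F}

theorem isClosed_setOf_continuous_apply (hT : ∀ a₀, ∃ C, ∀ᶠ a in 𝓝 a₀, ‖T a‖ ≤ C) :
    IsClosed {v : E | Continuous fun a => T a v} := by
  refine isClosed_of_closure_subset fun v hv => ?_
  obtain ⟨w, hwD, hwv⟩ := mem_closure_iff_seq_limit.1 hv
  refine TendstoLocallyUniformly.continuous (p := atTop) (F := fun n a => T a (w n)) ?_
    (Frequently.of_forall hwD)
  rw [Metric.tendstoLocallyUniformly_iff]
  intro ε hε a₀
  obtain ⟨C, hC⟩ := hT a₀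
  have hC' : 0 < |C| + 1 := by positivity
  refine ⟨_, hC, ?_⟩
  filter_upwards [Metric.tendsto_nhds.1 hwv (ε / (|C| + 1)) (div_pos hε hC')] with n hn a ha
  rw [dist_eq_norm, ← map_sub]
  calc ‖T a (v - w n)‖ ≤ ‖T a‖ * ‖v - w n‖ := (T a).le_opNorm _
    _ ≤ (|C| + 1) * ‖v - w n‖ := by
        gcongr; exact (show ‖T a‖ ≤ C from ha).trans ((le_abs_self C).trans (lt_add_one _).le)
    _ < ε := by
        rw [← dist_eq_norm, dist_comm]
        rwa [lt_div_iff₀' hC'] at hn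

theorem continuous_uncurry_apply_of_locally_bounded (hT : ∀ a₀, ∃ C, ∀ᶠ a in 𝓝 a₀, ‖T a‖ ≤ C)
    (hcont : ∀ v, Continuous fun a => T a v) :
    Continuous fun p : α × E => T p.1 p.2 := by
  refine continuous_iff_continuousAt.2 fun ⟨a₀, v₀⟩ => ?_
  obtain ⟨C, hC⟩ := hT a₀
  have hsmall : Tendsto (fun p : α × E => T p.1 (p.2 - v₀)) (𝓝 (a₀, v₀)) (𝓝 0) := by
    refine squeeze_zero_norm' ?_ (?_ : Tendsto (fun p : α × E => C * ‖p.2 - v₀‖) _ (𝓝 0))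
    · filter_upwards [continuous_fst.continuousAt.eventually hC] with p hp
      exact ((T p.1).le_opNorm _).trans (by gcongr)
    · have : Continuous fun p : α × E => C * ‖p.2 - v₀‖ := by fun_prop
      simpa using this.tendsto (a₀, v₀)
  have hfix : Tendsto (fun p : α × E => T p.1 v₀) (𝓝 (a₀, v₀)) (𝓝 (T a₀ v₀)) :=
    ((hcont v₀).comp continuous_fst).tendsto (a₀, v₀)
  simpa [ContinuousAt] using hsmall.add hfix

end StrongContinuity

instance lp.separableSpace_two {ι 𝕜 : Type*} [RCLike 𝕜] [Countable ι] :
    TopologicalSpace.SeparableSpace ℓ²(ι, 𝕜) := by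
  have hb := (default : HilbertBasis ι 𝕜 ℓ²(ι, 𝕜)).dense_span
  rw [← TopologicalSpace.isSeparable_univ_iff, ← Submodule.top_coe (R := 𝕜), ← hb,
    Submodule.topologicalClosure_coe]
  exact (Set.countable_range _).isSeparable.span.closure

section Reindex

variable {α β E : Type*} [NormedAddCommGroup E] {p : ℝ≥0∞}

theorem Memℓp.comp_equiv {f : α → E} (hf : Memℓp f p) (e : β ≃ α) : Memℓp (f ∘ e) p := by
  rcases p.trichotomy with rfl | rfl | hp
  · exact memℓp_zero (hf.finite_dsupport.preimage e.injective.injOn)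
  · have hrange := e.surjective.range_comp fun a => ‖f a‖
    exact memℓp_infty (hrange ▸ hf.bddAbove)
  · exact memℓp_gen ((e.summable_iff (f := fun a => ‖f a‖ ^ p.toReal)).2 (hf.summable hp))

variable (𝕜 : Type*) [NormedRing 𝕜] [Module 𝕜 E] [IsBoundedSMul 𝕜 E] [Fact (1 ≤ p)]

noncomputable def lp.compEquiv (e : β ≃ α) :
    lp (fun _ : α => E) p →ₗᵢ[𝕜] lp (fun _ : β => E) p where
  toFun f := ⟨f ∘ e, (lp.memℓp f).comp_equiv e⟩
  map_add' _ _ := rfl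
  map_smul' _ _ := rfl
  norm_map' f := by
    rcases p.trichotomy with hp | hp | hp
    · exact absurd (Fact.out : 1 ≤ p) (by simp [hp])
    · subst hp
      simp only [lp.norm_eq_ciSup]
      exact e.iSup_comp (g := fun a => ‖f a‖)
    · simp only [lp.norm_eq_tsum_rpow hp]
      congr 1
      exact e.tsum_eq (fun a => ‖f a‖ ^ p.toReal)

@[simp]
theorem lp.compEquiv_apply (e : β ≃ α) (f : lp (fun _ : α => E) p) (b : β) :
    lp.compEquiv 𝕜 e f b = f (e b) := rfl

end Reindex

section Diagonal

variable {α E : Type*} [NormedAddCommGroup E] [NormedSpace ℝ E] {p : ℝ≥0∞} [Fact (1 ≤ p)]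

noncomputable def lp.diagonal (c : α → ℝ) {C : ℝ} (hC : 0 ≤ C) (hc : ∀ a, ‖c a‖ ≤ C) :
    lp (fun _ : α => E) p →L[ℝ] lp (fun _ : α => E) p :=
  LinearMap.mkContinuous
    { toFun f := ⟨fun a => c a • f a, ((lp.memℓp f).norm.const_mul C).mono fun a => by
        rw [norm_smul]; gcongr; exact hc a⟩
      map_add' f g := lp.ext <| funext fun a => smul_add (c a) (f a) (g a)
      map_smul' r f := lp.ext <| funext fun a => smul_comm (c a) r (f a) }
    C fun f => by
      have hp : p ≠ 0 := (zero_lt_one.trans_le (Fact.out : 1 ≤ p)).ne'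
      calc _ ≤ ‖C • f‖ := lp.norm_mono hp fun a => by
              simp only [LinearMap.coe_mk, AddHom.coe_mk, lp.coeFn_smul, Pi.smul_apply, norm_smul,
                Real.norm_of_nonneg hC]
              gcongr
              exact hc a
        _ = C * ‖f‖ := by rw [norm_smul, Real.norm_of_nonneg hC]

@[simp]
theorem lp.diagonal_apply (c : α → ℝ) {C : ℝ} (hC : 0 ≤ C) (hc : ∀ a, ‖c a‖ ≤ C)
    (f : lp (fun _ : α => E) p) (a : α) : lp.diagonal c hC hc f a = c a • f a := rfl

theorem lp.norm_diagonal_le (c : α → ℝ) {C : ℝ} (hC : 0 ≤ C) (hc : ∀ a, ‖c a‖ ≤ C) :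
    ‖(lp.diagonal c hC hc : lp (fun _ : α => E) p →L[ℝ] _)‖ ≤ C :=
  LinearMap.mkContinuous_norm_le _ hC _

end Diagonal

section WeightedTranslation

variable {G X : Type*} [Group G] [MetricSpace X] [MulAction G X]

noncomputable def translationWeight (x₀ : X) (g : G) (x : X) : ℝ :=
  Real.exp (dist x (g • x₀) - dist x x₀)

theorem norm_translationWeight_le (x₀ : X) (g : G) (x : X) :
    ‖translationWeight x₀ g x‖ ≤ Real.exp (dist x₀ (g • x₀)) := by
  rw [translationWeight, Real.norm_of_nonneg (Real.exp_nonneg _), Real.exp_le_exp]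
  linarith [dist_triangle x x₀ (g • x₀)]

theorem translationWeight_one (x₀ x : X) : translationWeight x₀ (1 : G) x = 1 := by
  simp [translationWeight]

variable [IsIsometricSMul G X]

theorem translationWeight_mul (x₀ : X) (g h : G) (x : X) :
    translationWeight x₀ (g * h) x =
      translationWeight x₀ g x * translationWeight x₀ h (g⁻¹ • x) := by
  have hgh : dist (g⁻¹ • x) (h • x₀) = dist x ((g * h) • x₀) := by
    rw [← dist_smul g, smul_inv_smul, mul_smul]
  have hg : dist (g⁻¹ • x) x₀ = dist x (g • x₀) := by rw [← dist_smul g, smul_inv_smul]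
  rw [translationWeight, translationWeight, translationWeight, ← Real.exp_add, hgh, hg]
  congr 1
  ring

theorem translationWeight_smul (x₀ : X) (g : G) (y : X) :
    translationWeight x₀ g (g • y) = Real.exp (dist y x₀ - dist (g • y) x₀) := by
  rw [translationWeight, dist_smul]

variable (G) in
noncomputable def weightedTranslation (x₀ : X) : G →* (ℓ²(X, ℝ) →L[ℝ] ℓ²(X, ℝ)) where
  toFun g := (lp.diagonal (translationWeight x₀ g) (Real.exp_nonneg _)
    (norm_translationWeight_le x₀ g)).comp
      (lp.compEquiv ℝ (MulAction.toPerm g⁻¹)).toContinuousLinearMap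
  map_one' := by
    ext f x
    simp [translationWeight_one]
  map_mul' g h := by
    ext f x
    simp [translationWeight_mul x₀ g h, mul_smul, mul_assoc]

theorem weightedTranslation_apply (x₀ : X) (g : G) (f : ℓ²(X, ℝ)) (x : X) :
    weightedTranslation G x₀ g f x = translationWeight x₀ g x * f (g⁻¹ • x) := rfl

theorem weightedTranslation_single [DecidableEq X] (x₀ : X) (g : G) (y : X) (r : ℝ) :
    weightedTranslation G x₀ g (lp.single 2 y r) =
      lp.single 2 (g • y) (Real.exp (dist y x₀ - dist (g • y) x₀) * r) := by
  ext x
  rw [weightedTranslation_apply]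
  rcases eq_or_ne x (g • y) with rfl | hx
  · rw [inv_smul_smul, lp.single_apply_self, lp.single_apply_self, translationWeight_smul]
  · have hx' : g⁻¹ • x ≠ y := fun h => hx (by rw [← h, smul_inv_smul])
    rw [lp.single_apply_ne _ _ _ hx, lp.single_apply_ne _ _ _ hx', mul_zero]

theorem norm_weightedTranslation (x₀ : X) (g : G) :
    ‖weightedTranslation G x₀ g‖ = Real.exp (dist x₀ (g • x₀)) := by
  classical
  refine le_antisymm ?_ ?_
  · refine (ContinuousLinearMap.opNorm_comp_le _ _).trans ?_
    simpa using mul_le_mul (lp.norm_diagonal_le _ _ _)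
      (LinearIsometry.norm_toContinuousLinearMap_le _) (norm_nonneg _) (Real.exp_nonneg _)
  · have hpeak := weightedTranslation_single (G := G) x₀ g (g⁻¹ • x₀) 1
    rw [smul_inv_smul, dist_self, sub_zero, mul_one, ← dist_smul g, smul_inv_smul] at hpeak
    have := (weightedTranslation G x₀ g).unit_le_opNorm (lp.single 2 (g⁻¹ • x₀) (1 : ℝ))
      (by rw [lp.norm_single (by norm_num)]; simp)
    rwa [hpeak, lp.norm_single (by norm_num), Real.norm_of_nonneg (Real.exp_nonneg _)] at this

theorem continuous_weightedTranslation [TopologicalSpace G] [DiscreteTopology X]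
    (horbit : ∀ x : X, Continuous fun g : G => g • x) (x₀ : X) :
    Continuous fun p : G × ℓ²(X, ℝ) => weightedTranslation G x₀ p.1 p.2 := by
  classical
  have hnorm : Continuous fun g => ‖weightedTranslation G x₀ g‖ := by
    simp_rw [norm_weightedTranslation]
    have := horbit x₀
    fun_prop
  have hbd : ∀ g₀, ∃ C, ∀ᶠ g in 𝓝 g₀, ‖weightedTranslation G x₀ g‖ ≤ C := fun g₀ =>
    ⟨_, (hnorm.tendsto g₀).eventually_le_const (lt_add_one _)⟩
  have hsingle : ∀ y r, Continuous fun g => weightedTranslation G x₀ g (lp.single 2 y r) := by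
    intro y r
    simp_rw [weightedTranslation_single]
    have hδ : Continuous fun g : G => lp.singleContinuousLinearMap ℝ (fun _ : X => ℝ) 2 (g • y) :=
      (continuous_of_discreteTopology (f := lp.singleContinuousLinearMap ℝ _ 2)).comp (horbit y)
    have := horbit y
    exact hδ.clm_apply (by fun_prop)
  refine continuous_uncurry_apply_of_locally_bounded hbd fun f =>
    (isClosed_setOf_continuous_apply hbd).mem_of_tendsto (lp.hasSum_single ENNReal.ofNat_ne_top f)
      (Eventually.of_forall fun s => ?_)
  simp only [Set.mem_ofPred_eq, map_sum]
  exact continuous_finsetSum _ fun y _ => hsingle y (f y)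

end WeightedTranslation

universe u

theorem exists_unbounded_representation {G : Type*} [Group G] [TopologicalSpace G] {X : Type u}
    [MetricSpace X] [Countable X] [DiscreteTopology X] [MulAction G X] [IsIsometricSMul G X]
    (horbit : ∀ x : X, Continuous fun g : G => g • x) {x₀ : X}
    (hx₀ : ¬IsBounded (Set.range fun g : G => g • x₀)) :
    ∃ (H : Type u) (_ : NormedAddCommGroup H) (_ : InnerProductSpace ℝ H) (_ : CompleteSpace H)
      (_ : TopologicalSpace.SeparableSpace H) (π : G →* (H ≃L[ℝ] H)),
      Continuous (fun p : G × H => π p.1 p.2) ∧ ∀ C : ℝ, ∃ g : G, C < ‖(π g : H →L[ℝ] H)‖ := by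
  refine ⟨ℓ²(X, ℝ), inferInstance, inferInstance, inferInstance, inferInstance,
    (ContinuousLinearEquiv.unitsEquiv ℝ _).toMonoidHom.comp (weightedTranslation G x₀).toHomUnits,
    continuous_weightedTranslation horbit x₀, fun C => ?_⟩
  obtain ⟨g, hg⟩ : ∃ g : G, C < dist x₀ (g • x₀) := by
    by_contra! h
    refine hx₀ ((Metric.isBounded_closedBall (x := x₀) (r := C)).subset ?_)
    rintro _ ⟨g, rfl⟩
    exact Metric.mem_closedBall'.2 (h g)
  refine ⟨g, ?_⟩
  change C < ‖weightedTranslation G x₀ g‖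
  rw [norm_weightedTranslation]
  linarith [Real.add_one_le_exp (dist x₀ (g • x₀))]

theorem statement8_general {G : Type*} [Group G] [TopologicalSpace G]
    {X : Type*} [MetricSpace X] [Countable X] [MulAction G X]
    (hcont : Continuous fun p : G × X => p.1 • p.2)
    (hiso : ∀ g : G, Isometry fun x : X => g • x)
    (hsep : ∀ x y : X, x ≠ y → 1 ≤ dist x y)
    (hunb : ∃ x : X, ¬ Bornology.IsBounded (Set.range fun g : G => g • x)) :
    ∃ (H : Type) (_ : NormedAddCommGroup H) (_ : InnerProductSpace ℝ H) (_ : CompleteSpace H)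
      (_ : TopologicalSpace.SeparableSpace H) (π : G →* (H ≃L[ℝ] H)),
      Continuous (fun p : G × H => π p.1 p.2) ∧
      (∀ C : ℝ, ∃ g : G, C < ‖(π g : H →L[ℝ] H)‖) := by
  obtain ⟨x₀, hx₀⟩ := hunb
  -- a copy of `X` in `Type`, so that `ℓ²` of it lies in `Type`
  let e : Shrink.{0} X ≃ X := (equivShrink.{0} X).symm
  let _ : MetricSpace (Shrink.{0} X) := MetricSpace.induced e e.injective ‹_›
  have he : Isometry e := Isometry.of_dist_eq fun _ _ => rfl
  have he_smul (g : G) (y : Shrink.{0} X) : e (g • y) = g • e y := equivShrink_symm_smul g y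
  have : Countable (Shrink.{0} X) := Countable.of_equiv X e.symm
  have : DiscreteTopology (Shrink.{0} X) :=
    DiscreteTopology.of_forall_le_dist one_pos fun y y' hne => hsep _ _ (e.injective.ne hne)
  have : IsIsometricSMul G (Shrink.{0} X) := ⟨fun g => Isometry.of_dist_eq fun y y' => by
    rw [← he.dist_eq, he_smul, he_smul, (hiso g).dist_eq, he.dist_eq]⟩
  refine exists_unbounded_representation (x₀ := e.symm x₀) (fun y => ?_) fun hb => hx₀ ?_
  · rw [he.isEmbedding.continuous_iff]
    simp only [Function.comp_def, he_smul]
    exact hcont.comp (continuous_id.prodMk continuous_const)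
  · simpa [← Set.range_comp, Function.comp_def, he_smul] using he.lipschitz.isBounded_image hb

/-- Let `G` be a Polish group acting continuously by isometries on a countable
metric space `(X, d)` with `d(x,y) ≥ 1` for all distinct `x, y` (so `X` is discrete), with some
unbounded orbit. Then there are a separable Hilbert space `H` and a continuous linear
representation `π : G → GL(H)` which is unbounded, i.e. `sup_{g ∈ G} ‖π(g)‖ = ∞`. -/
theorem statement8 {G : Type*} [Group G] [TopologicalSpace G] [IsTopologicalGroup G] [PolishSpace G]
    {X : Type*} [MetricSpace X] [Countable X] [MulAction G X]
    (hcont : Continuous fun p : G × X => p.1 • p.2)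
    (hiso : ∀ g : G, Isometry fun x : X => g • x)
    (hsep : ∀ x y : X, x ≠ y → 1 ≤ dist x y)
    (hunb : ∃ x : X, ¬ Bornology.IsBounded (Set.range fun g : G => g • x)) :
    ∃ (H : Type) (_ : NormedAddCommGroup H) (_ : InnerProductSpace ℝ H) (_ : CompleteSpace H)
      (_ : TopologicalSpace.SeparableSpace H) (π : G →* (H ≃L[ℝ] H)),
      Continuous (fun p : G × H => π p.1 p.2) ∧
      (∀ C : ℝ, ∃ g : G, C < ‖(π g : H →L[ℝ] H)‖) :=
  statement8_general hcont hiso hsep hunb
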